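/- arXiv:1612.03607 — 3 statements merged into one kernel-verified Lean document; each statement's English description precedes it below -/
import Mathlib

section
/- Let H = (V,A) be a digraph containing an out-branching rooted at s ∈ V. Then every out-tree rooted at s that is a subdigraph of H with q leaves can be extended into an out-branching of H rooted at s with at least q leaves. -/
namespace CutPaper

variable {V : Type*}

/-- A directed path in the digraph `A`, given as a nonempty list of distinct
vertices from `u` to `v` with consecutive vertices joined by arcs. -/
def IsPath (A : V → V → Prop) (p : List V) (u v : V) : Prop :=
  p.Chain' A ∧ p.head? = some u ∧ p.getLast? = some v ∧ p.Nodup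

/-- `v` is reachable from `u` in the digraph `A`. -/
def Reaches (A : V → V → Prop) (u v : V) : Prop := ∃ p, IsPath A p u v

/-- Two paths from `r` to `v` are internally disjoint: they share only `r` and `v`. -/
def IntDisj (p q : List V) (r v : V) : Prop :=
  ∀ x, x ∈ p → x ∈ q → x = r ∨ x = v

/-- `v` is bi-reachable from `r`: there are two (distinct) internally
vertex-disjoint paths from `r` to `v`. -/
def BiReachable (A : V → V → Prop) (r v : V) : Prop :=
  ∃ p q, p ≠ q ∧ IsPath A p r v ∧ IsPath A q r v ∧ IntDisj p q r v

/-- The diblock of `r`: bi-reachable vertices together with `r` and its out-neighbours. -/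
def diblock (A : V → V → Prop) (r : V) : Set V :=
  {v | BiReachable A r v} ∪ {r} ∪ {v | A r v}

/-- The subdigraph of `A` induced on a vertex set `S`. -/
def Asub (A : V → V → Prop) (S : Set V) : V → V → Prop :=
  fun u v => A u v ∧ u ∈ S ∧ v ∈ S

/-- The path `p` meets the set `B` for the last time in `x`. -/
def LastTouch (B : Set V) (p : List V) (x : V) : Prop :=
  ∃ p₁ p₂, p = p₁ ++ x :: p₂ ∧ x ∈ B ∧ ∀ y ∈ p₂, y ∉ B

/-- `T` is an out-tree with vertex set `S` and root `r`, as a subdigraph of `A`. -/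
structure IsOutTree (A T : V → V → Prop) (S : Set V) (r : V) : Prop where
  sub : ∀ u v, T u v → A u v
  mem : ∀ u v, T u v → u ∈ S ∧ v ∈ S
  root_mem : r ∈ S
  no_in_root : ∀ u, ¬ T u r
  unique_in : ∀ v ∈ S, v ≠ r → ∃! u, T u v
  reach : ∀ v ∈ S, Reaches T r v

/-- `T` is an in-tree with vertex set `S` and root `r`, as a subdigraph of `A`. -/
def IsInTree (A T : V → V → Prop) (S : Set V) (r : V) : Prop :=
  IsOutTree (fun u v => A v u) (fun u v => T v u) S r

/-- The leaves (vertices of out-degree zero) of an out-tree `T` on vertex set `S`. -/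
def leaves (T : V → V → Prop) (S : Set V) : Set V :=
  {v | v ∈ S ∧ ∀ u, ¬ T v u}

/-- The leaves (vertices of in-degree zero) of an in-tree `T` on vertex set `S`. -/
def inLeaves (T : V → V → Prop) (S : Set V) : Set V :=
  {v | v ∈ S ∧ ∀ u, ¬ T u v}

/-- The raw data of a rooted cut decomposition: a node set, a parent map,
and an assignment of diblocks to nodes. -/
structure PreDecomp (V : Type*) where
  N : Set V
  parent : V → V
  B : V → Set V

/-- One step up the decomposition tree rooted at `r`. -/
def Step (d : PreDecomp V) (r : V) (a b : V) : Prop :=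
  a ∈ d.N ∧ a ≠ r ∧ d.parent a = b

/-- `x` is an ancestor (not necessarily proper) of `y` in the decomposition tree. -/
def Anc (d : PreDecomp V) (r : V) (x y : V) : Prop :=
  Relation.ReflTransGen (Step d r) y x

/-- `y` is a child of `x` in the decomposition tree. -/
def IsChild (d : PreDecomp V) (r : V) (y x : V) : Prop :=
  y ∈ d.N ∧ y ≠ r ∧ d.parent y = x

/-- `B*_x`: the union of the diblocks over the subtree rooted at `x`. -/
def Bstar (d : PreDecomp V) (r : V) (x : V) : Set V :=
  {v | ∃ y ∈ d.N, Anc d r x y ∧ v ∈ d.B y}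

/-- The partition class `X_y` of a bottleneck `y` of the diblock of `x`
inside `B*_x`: the vertices below `B x` whose access paths from `x`
leave `B x` for the last time at `y`. -/
def PartClass (A : V → V → Prop) (d : PreDecomp V) (r x y : V) : Set V :=
  {v | v ∈ Bstar d r x ∧ v ∉ d.B x ∧
    ∀ p, IsPath (Asub A (Bstar d r x)) p x v → LastTouch (d.B x) p y}

/-- `d` is the `r`-rooted cut decomposition of the digraph `A`:
the tree is well-founded towards the root `r`, the diblocks cover all vertices,
each `B x` is the diblock of `x` in the subdigraph induced on `B*_x`,
the children of `x` are exactly the bottlenecks of `B x`, and the subtree of a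
child `y` spans exactly `{y}` together with the partition class of `y`. -/
structure IsCutDecomp (A : V → V → Prop) (r : V) (d : PreDecomp V) : Prop where
  root_mem : r ∈ d.N
  parent_mem : ∀ x ∈ d.N, x ≠ r → d.parent x ∈ d.N
  tree : ∀ x ∈ d.N, Anc d r r x
  cover : Bstar d r r = Set.univ
  diblock_eq : ∀ x ∈ d.N, d.B x = diblock (Asub A (Bstar d r x)) x
  child_iff : ∀ x ∈ d.N, ∀ y,
    IsChild d r y x ↔ (y ∈ d.B x ∧ y ≠ x ∧ (PartClass A d r x y).Nonempty)
  child_part : ∀ x ∈ d.N, ∀ y, IsChild d r y x →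
    Bstar d r y = insert y (PartClass A d r x y)


/-!
Graft onto `T` the arcs of `Tb` that enter vertices outside `S`; the result is an out-branching
containing `T`. No grafted arc enters `S`, so every proper descendant of a leaf of `T` lies outside
`S`. Hence choosing a leaf of the new branching below each leaf of `T` is injective: two leaves of
`T` with a common descendant are comparable, as the ancestors of a vertex form a chain, so equal.
-/

open Relation

section Paths

variable {A : V → V → Prop}

lemma IsPath.eq_append_singleton {p : List V} {u v : V} (hp : IsPath A p u v) (hvu : v ≠ u) :
    ∃ p₀ w, p = p₀ ++ [v] ∧ IsPath A p₀ u w ∧ A w v := by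
  obtain ⟨hc, hh, hl, hn⟩ := hp
  rcases List.eq_nil_or_concat p with rfl | ⟨p₀, a, rfl⟩
  · simp at hh
  · rw [List.concat_eq_append] at *
    obtain rfl : a = v := by simpa using hl
    have hp₀ : p₀ ≠ [] := by
      rintro rfl
      exact hvu (by simpa using hh)
    refine ⟨p₀, p₀.getLast hp₀, rfl, ⟨hc.prefix ⟨[a], rfl⟩, ?_, ?_, ?_⟩, ?_⟩
    · rwa [List.head?_append_of_ne_nil _ hp₀] at hh
    · exact List.getLast?_eq_some_getLast hp₀
    · exact hn.sublist (List.sublist_append_left _ _)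
    · exact (List.isChain_append.mp hc).2.2 _
        (by rw [List.getLast?_eq_some_getLast hp₀]; rfl) a rfl

lemma Reaches.tail {u v w : V} (h : Reaches A u v) (hvw : A v w) : Reaches A u w := by
  obtain ⟨p, hc, hh, hl, hn⟩ := h
  by_cases hw : w ∈ p
  · obtain ⟨p₁, p₂, rfl⟩ := List.append_of_mem hw
    refine ⟨p₁ ++ [w], hc.prefix ⟨p₂, by simp⟩, ?_, List.getLast?_concat, ?_⟩
    · rw [← hh]; cases p₁ <;> rfl
    · exact hn.sublist ((List.cons_sublist_cons.2 (List.nil_sublist p₂)).append_left p₁)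
  · have hp : p ≠ [] := by rintro rfl; simp at hh
    refine ⟨p ++ [w], ?_, by rwa [List.head?_append_of_ne_nil _ hp], List.getLast?_concat, ?_⟩
    · refine List.isChain_append.mpr ⟨hc, List.isChain_singleton w, ?_⟩
      intro x hx y hy
      obtain rfl : v = x := by simpa [hl] using hx
      obtain rfl : w = y := by simpa using hy
      exact hvw
    · exact List.nodup_append.mpr ⟨hn, List.nodup_singleton w,
        fun a ha b hb => by
          obtain rfl := List.mem_singleton.1 hb
          rintro rfl
          exact hw ha⟩

lemma reaches_iff_reflTransGen {u v : V} : Reaches A u v ↔ ReflTransGen A u v := by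
  constructor
  · rintro ⟨_ | ⟨a, l⟩, hc, hh, hl, -⟩
    · simp at hh
    · obtain rfl : a = u := by simpa using hh
      exact List.relationReflTransGen_of_exists_isChain_cons l hc
        (by simpa [List.getLast?_eq_some_getLast] using hl)
  · intro h
    induction h with
    | refl => exact ⟨[u], List.isChain_singleton u, rfl, rfl, List.nodup_singleton u⟩
    | tail _ hbc ih => exact ih.tail hbc

end Paths

noncomputable def depth (T : V → V → Prop) (r v : V) : ℕ :=
  sInf {n | ∃ p, IsPath T p r v ∧ p.length = n}

namespace IsOutTree

variable {A T : V → V → Prop} {S : Set V} {r : V}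

lemma leftUnique (hT : IsOutTree A T S r) : Relator.LeftUnique T := fun u u' v hu hu' => by
  have hvr : v ≠ r := by rintro rfl; exact hT.no_in_root u hu
  exact (hT.unique_in v (hT.mem u v hu).2 hvr).unique hu hu'

lemma reflTransGen_total (hT : IsOutTree A T S r) {u u' w : V} (hu : ReflTransGen T u w)
    (hu' : ReflTransGen T u' w) : ReflTransGen T u u' ∨ ReflTransGen T u' u := by
  have := ReflTransGen.total_of_right_unique (r := Function.swap T)
    (fun _ _ _ h h' => hT.leftUnique h h') (reflTransGen_swap.2 hu) (reflTransGen_swap.2 hu')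
  simpa only [reflTransGen_swap, or_comm] using this

lemma depth_lt (hT : IsOutTree A T S r) {u v : V} (huv : T u v) : depth T r u < depth T r v := by
  have hvr : v ≠ r := by rintro rfl; exact hT.no_in_root u huv
  obtain ⟨p', hp'⟩ := hT.reach v (hT.mem u v huv).2
  obtain ⟨p, hp, hlen⟩ : ∃ p, IsPath T p r v ∧ p.length = depth T r v :=
    Nat.sInf_mem (s := {n | ∃ p, IsPath T p r v ∧ p.length = n}) ⟨_, p', hp', rfl⟩
  obtain ⟨p₀, u₀, rfl, hp₀, hu₀v⟩ := hp.eq_append_singleton hvr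
  obtain rfl : u₀ = u := hT.leftUnique hu₀v huv
  calc depth T r u₀ ≤ p₀.length := Nat.sInf_le ⟨p₀, hp₀, rfl⟩
    _ < depth T r v := by rw [← hlen]; simp

lemma exists_leaf [Finite V] (hT : IsOutTree A T S r) (v : V) :
    ∃ w, ReflTransGen T v w ∧ ∀ z, ¬ T w z := by
  obtain ⟨w, hw, hmax⟩ :=
    Set.exists_max_image {w | ReflTransGen T v w} (depth T r) (Set.toFinite _) ⟨v, .refl⟩
  exact ⟨w, hw, fun z hz => (hT.depth_lt hz).not_ge (hmax z (hw.tail hz))⟩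

end IsOutTree

def graft (T Tb : V → V → Prop) (S : Set V) : V → V → Prop :=
  fun u v => T u v ∨ (v ∉ S ∧ Tb u v)

section Graft

variable {A T Tb : V → V → Prop} {S : Set V} {s : V}

lemma graft_iff_of_mem {u v : V} (hv : v ∈ S) : graft T Tb S u v ↔ T u v := by
  simp [graft, hv]

lemma isOutTree_graft (hTb : IsOutTree A Tb Set.univ s) (hT : IsOutTree A T S s) :
    IsOutTree A (graft T Tb S) Set.univ s where
  sub u v := by rintro (h | ⟨-, h⟩); exacts [hT.sub u v h, hTb.sub u v h]
  mem _ _ _ := ⟨trivial, trivial⟩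
  root_mem := trivial
  no_in_root u := by rintro (h | ⟨hs, -⟩); exacts [hT.no_in_root u h, hs hT.root_mem]
  unique_in v _ hvs := by
    by_cases hv : v ∈ S
    · simpa only [graft_iff_of_mem hv] using hT.unique_in v hv hvs
    · obtain ⟨u, hu, huniq⟩ := hTb.unique_in v trivial hvs
      refine ⟨u, Or.inr ⟨hv, hu⟩, ?_⟩
      rintro w (hw | ⟨-, hw⟩)
      · exact absurd (hT.mem w v hw).2 hv
      · exact huniq w hw
  reach v hv := by
    clear hv
    rw [reaches_iff_reflTransGen]
    induction reaches_iff_reflTransGen.1 (hTb.reach v trivial) with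
    | refl => exact .refl
    | @tail b c _ hbc ih =>
      by_cases hc : c ∈ S
      · exact ReflTransGen.mono (fun _ _ => Or.inl) _ _
          (reaches_iff_reflTransGen.1 (hT.reach c hc))
      · exact ih.tail (Or.inr ⟨hc, hbc⟩)

lemma eq_of_reflTransGen_graft (hT : IsOutTree A T S s) {u w : V} (hu : u ∈ leaves T S)
    (huw : ReflTransGen (graft T Tb S) u w) (hw : w ∈ S) : w = u := by
  induction huw with
  | refl => rfl
  | @tail b c _ hbc ih =>
    have hTbc : T b c := (graft_iff_of_mem hw).1 hbc
    obtain rfl := ih (hT.mem b c hTbc).1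
    exact absurd hTbc (hu.2 c)

end Graft

/-- any rooted out-tree with `q` leaves extends to a rooted
out-branching with at least `q` leaves. -/
theorem outTree_extension {V : Type*} [Fintype V]
    (A T Tb : V → V → Prop) (s : V) (q : ℕ) (S : Set V)
    (hTb : IsOutTree A Tb Set.univ s)
    (hT : IsOutTree A T S s)
    (hq : q ≤ (leaves T S).ncard) :
    ∃ T' : V → V → Prop, IsOutTree A T' Set.univ s ∧
      (∀ u v, T u v → T' u v) ∧ q ≤ (leaves T' Set.univ).ncard := by
  have hT' := isOutTree_graft hTb hT
  choose f hf using hT'.exists_leaf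
  have hinj : Set.InjOn f (leaves T S) := by
    intro u hu u' hu' huu'
    rcases hT'.reflTransGen_total (hf u).1 (huu' ▸ (hf u').1) with h | h
    · exact (eq_of_reflTransGen_graft hT hu h hu'.1).symm
    · exact eq_of_reflTransGen_graft hT hu' h hu.1
  refine ⟨graft T Tb S, hT', fun u v => Or.inl, hq.trans ?_⟩
  exact Set.ncard_le_ncard_of_injOn f (fun u _ => ⟨trivial, (hf u).2⟩) hinj (Set.toFinite _)

end CutPaper
end

section
/- Let H be a digraph, r ∈ V(H) such that every vertex of H is reachable from r, and let B_r be the diblock of r in H. Then for every pair of distinct vertices x, y ∈ B_r, there exist a directed r-x-path P_x and a directed r-y-path P_y in H that intersect only in r. -/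
namespace CutPaper

variable {V : Type*}

/-!
Every vertex `x ≠ r` of the diblock has two paths `P₁, P₂` from `r` meeting only in `r` and `x`,
and for `y ≠ x` one of the paths to `y` avoids `x`. Let `z` be the last vertex of such a path
`Q` on `P₁ ∪ P₂`, say on `P₁`. Following `P₁` up to `z` and then `Q` to `y` gives a path to `y`
that meets `P₂` only in `r`.
-/

section Paths

variable {A : V → V → Prop} {r u v x y z : V} {p q p₁ p₂ q₁ q₂ P₁ P₂ Q : List V}

lemma IsPath.head_mem (h : IsPath A p u v) : u ∈ p :=
  List.mem_of_mem_head? h.2.1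

lemma isPath_singleton (u : V) : IsPath A [u] u u :=
  ⟨List.isChain_singleton u, rfl, rfl, List.nodup_singleton u⟩

lemma isPath_pair (h : A u v) (huv : u ≠ v) : IsPath A [u, v] u v :=
  ⟨List.isChain_pair.mpr h, rfl, rfl, by simp [huv]⟩

lemma IsPath.take_of_eq_append_cons (h : IsPath A (p₁ ++ z :: p₂) u v) :
    IsPath A (p₁ ++ [z]) u z := by
  obtain ⟨hc, hh, -, hn⟩ := h
  rw [← List.singleton_append, ← List.append_assoc] at hc hn
  refine ⟨hc.left_of_append, ?_, List.getLast?_concat, hn.of_append_left⟩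
  cases p₁ <;> simpa using hh

lemma IsPath.drop_of_eq_append_cons (h : IsPath A (p₁ ++ z :: p₂) u v) :
    IsPath A (z :: p₂) z v := by
  obtain ⟨hc, -, hl, hn⟩ := h
  refine ⟨hc.right_of_append, rfl, ?_, hn.of_append_right⟩
  rwa [List.getLast?_append_of_ne_nil p₁ (List.cons_ne_nil z p₂)] at hl

lemma IsPath.end_not_mem_take (h : IsPath A (p₁ ++ z :: p₂) u v) (hzv : z ≠ v) :
    v ∉ p₁ ++ [z] := by
  have hv : v ∈ z :: p₂ := (h.drop_of_eq_append_cons).2.2.1 |> List.mem_of_mem_getLast?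
  rw [List.mem_append, List.mem_singleton]
  rintro (hv₁ | rfl)
  · exact List.disjoint_of_nodup_append h.2.2.2 hv₁ hv
  · exact hzv rfl

lemma IsPath.append (hp : IsPath A p u z) (hq : IsPath A (z :: q) z v)
    (hpq : ∀ w ∈ q, w ∉ p) : IsPath A (p ++ q) u v := by
  obtain ⟨hpc, hph, hpl, hpn⟩ := hp
  obtain ⟨hqc, -, hql, hqn⟩ := hq
  refine ⟨hpc.append hqc.tail ?_, ?_, ?_, hpn.append hqn.of_cons fun a ha hb => hpq a hb ha⟩
  · intro a ha b hb
    rw [hpl, Option.mem_some_iff] at ha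
    exact ha ▸ List.isChain_cons.mp hqc |>.1 b hb
  · cases p <;> simp_all
  · cases q with
    | nil => simpa [hpl] using hql
    | cons b s =>
      rwa [List.getLast?_append_of_ne_nil p (List.cons_ne_nil b s), ← List.getLast?_cons_cons]

lemma exists_lastTouch {B : Set V} : ∀ {p : List V}, (∃ a ∈ p, a ∈ B) → ∃ x, LastTouch B p x
  | [], ⟨_, ha, _⟩ => absurd ha List.not_mem_nil
  | a :: t, ⟨b, hb, hbB⟩ => by
    by_cases ht : ∃ c ∈ t, c ∈ B
    · obtain ⟨x, t₁, t₂, rfl, hx, ht₂⟩ := exists_lastTouch ht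
      exact ⟨x, a :: t₁, t₂, rfl, hx, ht₂⟩
    · simp only [not_exists, not_and] at ht
      obtain rfl | hbt := List.mem_cons.mp hb
      · exact ⟨b, [], t, rfl, hbB, ht⟩
      · exact absurd hbB (ht b hbt)

lemma exists_paths_inter_eq_root_of_lastTouch (hP₁ : IsPath A P₁ r x) (hP₂ : IsPath A P₂ r x)
    (hdisj : IntDisj P₁ P₂ r x) (hQ : IsPath A (q₁ ++ z :: q₂) r y) (hz : z ∈ P₁) (hzx : z ≠ x)
    (hq₂ : ∀ w ∈ q₂, w ∉ P₁ ∧ w ∉ P₂) :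
    ∃ p q, IsPath A p r x ∧ IsPath A q r y ∧ ∀ w, w ∈ p → w ∈ q → w = r := by
  obtain ⟨s, t, rfl⟩ := List.append_of_mem hz
  have hs_sub : ∀ w ∈ s ++ [z], w ∈ s ++ z :: t := by simp +contextual [or_imp]
  refine ⟨P₂, s ++ [z] ++ q₂, hP₂, ?_, fun w hw₂ hw => ?_⟩
  · exact hP₁.take_of_eq_append_cons.append hQ.drop_of_eq_append_cons
      fun w hw hws => (hq₂ w hw).1 (hs_sub w hws)
  rcases List.mem_append.mp hw with hws | hwq
  · exact (hdisj w (hs_sub w hws) hw₂).resolve_right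
      fun hwx => hP₁.end_not_mem_take hzx (hwx ▸ hws)
  · exact absurd hw₂ (hq₂ w hwq).2

lemma exists_paths_inter_eq_root (hP₁ : IsPath A P₁ r x) (hP₂ : IsPath A P₂ r x)
    (hdisj : IntDisj P₁ P₂ r x) (hQ : IsPath A Q r y) (hxQ : x ∉ Q) :
    ∃ p q, IsPath A p r x ∧ IsPath A q r y ∧ ∀ w, w ∈ p → w ∈ q → w = r := by
  obtain ⟨z, q₁, q₂, rfl, hz, hq₂⟩ :=
    exists_lastTouch (B := {w | w ∈ P₁ ∨ w ∈ P₂}) ⟨r, hQ.head_mem, Or.inl hP₁.head_mem⟩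
  have hzx : z ≠ x := by rintro rfl; simp at hxQ
  simp only [Set.mem_ofPred_eq, not_or] at hz hq₂
  rcases hz with hz | hz
  · exact exists_paths_inter_eq_root_of_lastTouch hP₁ hP₂ hdisj hQ hz hzx hq₂
  · exact exists_paths_inter_eq_root_of_lastTouch hP₂ hP₁ (fun w h₂ h₁ => hdisj w h₁ h₂) hQ hz hzx
      fun w hw => (hq₂ w hw).symm

end Paths

section Diblock

variable {A : V → V → Prop} {r x y : V}

lemma exists_intDisj_of_mem_diblock (hx : x ∈ diblock A r) (hxr : x ≠ r) :
    ∃ p q, IsPath A p r x ∧ IsPath A q r x ∧ IntDisj p q r x := by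
  rcases hx with (⟨p, q, -, hp, hq, hpq⟩ | rfl) | hrx
  · exact ⟨p, q, hp, hq, hpq⟩
  · exact absurd rfl hxr
  · refine ⟨[r, x], [r, x], isPath_pair hrx hxr.symm, isPath_pair hrx hxr.symm, ?_⟩
    simp +contextual [IntDisj]

lemma reaches_of_mem_diblock (hx : x ∈ diblock A r) : Reaches A r x := by
  by_cases hxr : x = r
  · subst hxr
    exact ⟨[x], isPath_singleton x⟩
  · obtain ⟨p, -, hp, -⟩ := exists_intDisj_of_mem_diblock hx hxr
    exact ⟨p, hp⟩

lemma exists_isPath_not_mem_of_mem_diblock (hy : y ∈ diblock A r) (hyr : y ≠ r)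
    (hxr : x ≠ r) (hxy : x ≠ y) : ∃ q, IsPath A q r y ∧ x ∉ q := by
  obtain ⟨p, q, hp, hq, hpq⟩ := exists_intDisj_of_mem_diblock hy hyr
  by_cases hxp : x ∈ p
  · exact ⟨q, hq, fun hxq => (hpq x hxp hxq).elim hxr hxy⟩
  · exact ⟨p, hp, hxp⟩

end Diblock

theorem diblock_pair_paths_general {V : Type*}
    (A : V → V → Prop) (r : V)
    (x y : V) (hx : x ∈ diblock A r) (hy : y ∈ diblock A r) (hxy : x ≠ y) :
    ∃ p q, IsPath A p r x ∧ IsPath A q r y ∧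
      ∀ z, z ∈ p → z ∈ q → z = r := by
  by_cases hxr : x = r
  · subst hxr
    obtain ⟨q, hq⟩ := reaches_of_mem_diblock hy
    exact ⟨[x], q, isPath_singleton x, hq, fun z hz _ => List.mem_singleton.mp hz⟩
  by_cases hyr : y = r
  · subst hyr
    obtain ⟨p, hp⟩ := reaches_of_mem_diblock hx
    exact ⟨p, [y], hp, isPath_singleton y, fun z _ hz => List.mem_singleton.mp hz⟩
  obtain ⟨P₁, P₂, hP₁, hP₂, hdisj⟩ := exists_intDisj_of_mem_diblock hx hxr
  obtain ⟨Q, hQ, hxQ⟩ := exists_isPath_not_mem_of_mem_diblock hy hyr hxr hxy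
  exact exists_paths_inter_eq_root hP₁ hP₂ hdisj hQ hxQ

/-- any two distinct vertices of the diblock of `r` can be reached
by paths from `r` intersecting only in `r`. -/
theorem diblock_pair_paths {V : Type*}
    (A : V → V → Prop) (r : V) (hreach : ∀ v, Reaches A r v)
    (x y : V) (hx : x ∈ diblock A r) (hy : y ∈ diblock A r) (hxy : x ≠ y) :
    ∃ p q, IsPath A p r x ∧ IsPath A q r y ∧
      ∀ z, z ∈ p → z ∈ q → z = r :=
  diblock_pair_paths_general A r x y hx hy hxy

end CutPaper
end

section
/- Let (T̂, {B_x}) be the r-rooted cut decomposition of a digraph H. For distinct nodes x, y ∈ T̂: if x is the parent of y in T̂ then B_x ∩ B_y = {y}; in every other situation B_x ∩ B_y = ∅. -/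
namespace CutPaper

variable {V : Type*}

/-! Each vertex of `B*_z` is reached from `z` inside `B*_z`, and all such access paths leave
`B z` for the last time at the same bottleneck, so the subtrees of distinct children of `z` are
disjoint, and the subtree of a child `w` meets `B z` only in `w`. Two nodes are either parent and
child, or one is a proper ancestor of the other through a child different from it, or they branch
apart below their last common ancestor; in each case these two facts give the intersection. -/

open Relation

section Paths

variable {A : V → V → Prop}

theorem IsPath.reflTransGen {p : List V} {u v : V} (hp : IsPath A p u v) :
    ReflTransGen A u v := by
  obtain ⟨hchain, hu, hv, -⟩ := hp
  have hne : p ≠ [] := by rintro rfl; simp at hu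
  rw [List.head?_eq_some_head hne, Option.some.injEq] at hu
  rw [List.getLast?_eq_some_getLast hne, Option.some.injEq] at hv
  exact hu ▸ hv ▸ List.relationReflTransGen_of_exists_isChain p hchain hne

theorem IsPath.cons {p : List V} {a b v : V} (hp : IsPath A p b v) (hab : A a b)
    (ha : a ∉ p) : IsPath A (a :: p) a v := by
  obtain ⟨hchain, hb, hv, hnodup⟩ := hp
  have hne : p ≠ [] := by rintro rfl; simp at hb
  refine ⟨?_, rfl, ?_, List.nodup_cons.mpr ⟨ha, hnodup⟩⟩
  · obtain ⟨c, t, rfl⟩ := List.exists_cons_of_ne_nil hne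
    cases Option.some.inj hb
    exact hchain.cons_cons hab
  · simp [List.getLast?_cons, hv]

theorem IsPath.suffix {p₁ p₂ : List V} {a u v : V} (hp : IsPath A (p₁ ++ a :: p₂) u v) :
    IsPath A (a :: p₂) a v := by
  obtain ⟨hchain, -, hv, hnodup⟩ := hp
  refine ⟨hchain.infix ⟨p₁, [], by simp⟩, rfl, ?_, hnodup.sublist (List.sublist_append_right _ _)⟩
  rwa [List.getLast?_append_of_ne_nil _ (List.cons_ne_nil _ _)] at hv

/-- Loops are cut out of a walk by restarting it at the first repeated vertex. -/
theorem reaches_of_reflTransGen {u v : V} (h : ReflTransGen A u v) : Reaches A u v := by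
  induction h using ReflTransGen.head_induction_on with
  | refl => exact ⟨[v], ⟨List.isChain_singleton v, rfl, rfl, List.nodup_singleton v⟩⟩
  | @head a b hab _ ih =>
    obtain ⟨p, hp⟩ := ih
    by_cases ha : a ∈ p
    · obtain ⟨p₁, p₂, rfl⟩ := List.append_of_mem ha
      exact ⟨_, hp.suffix⟩
    · exact ⟨_, hp.cons hab ha⟩

end Paths

theorem LastTouch.unique {B : Set V} {p : List V} {a b : V}
    (ha : LastTouch B p a) (hb : LastTouch B p b) : a = b := by
  obtain ⟨p₁, p₂, hp, haB, hp₂⟩ := ha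
  obtain ⟨q₁, q₂, hq, hbB, hq₂⟩ := hb
  have hsa : (a :: p₂) <:+ p := ⟨p₁, hp.symm⟩
  have hsb : (b :: q₂) <:+ p := ⟨q₁, hq.symm⟩
  rcases le_total (a :: p₂).length (b :: q₂).length with hle | hle
  · rcases List.mem_cons.mp ((List.suffix_of_suffix_length_le hsa hsb hle).mem
      List.mem_cons_self) with h | h
    · exact h
    · exact absurd haB (hq₂ a h)
  · rcases List.mem_cons.mp ((List.suffix_of_suffix_length_le hsb hsa hle).mem
      List.mem_cons_self) with h | h
    · exact h.symm
    · exact absurd hbB (hp₂ b h)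

theorem exists_branch_of_not_reflTransGen {R : V → V → Prop} {x y a : V}
    (hxy : ¬ ReflTransGen R x y) (hyx : ¬ ReflTransGen R y x)
    (hxa : ReflTransGen R x a) (hya : ReflTransGen R y a) :
    ∃ z w₁ w₂, R w₁ z ∧ R w₂ z ∧ w₁ ≠ w₂ ∧ ReflTransGen R x w₁ ∧ ReflTransGen R y w₂ := by
  induction hxa with
  | refl => exact absurd hya hyx
  | @tail b a hxb hba ih =>
    rcases hya.cases_tail with rfl | ⟨c, hyc, hca⟩
    · exact absurd (hxb.tail hba) hxy
    · by_cases hbc : b = c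
      · exact ih (hbc ▸ hyc)
      · exact ⟨a, b, c, hba, hca, hbc, hxb, hyc⟩

section Decomp

variable {A : V → V → Prop} {r : V} {d : PreDecomp V}

theorem B_subset_Bstar {x : V} (hx : x ∈ d.N) : d.B x ⊆ Bstar d r x :=
  fun _ hv => ⟨x, hx, .refl, hv⟩

theorem Bstar_subset_of_anc {a b : V} (hab : Anc d r a b) : Bstar d r b ⊆ Bstar d r a :=
  fun _ ⟨c, hc, hbc, hv⟩ => ⟨c, hc, hbc.trans hab, hv⟩

namespace IsCutDecomp

variable (hD : IsCutDecomp A r d)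
include hD

theorem self_mem_B {x : V} (hx : x ∈ d.N) : x ∈ d.B x := by
  rw [hD.diblock_eq x hx]
  exact .inl (.inr rfl)

theorem mem_of_isChild {x y : V} (hyx : IsChild d r y x) : x ∈ d.N :=
  hyx.2.2 ▸ hD.parent_mem y hyx.1 hyx.2.1

theorem child_mem_B {x y : V} (hyx : IsChild d r y x) : y ∈ d.B x :=
  ((hD.child_iff x (hD.mem_of_isChild hyx) y).mp hyx).1

theorem child_ne {x y : V} (hyx : IsChild d r y x) : y ≠ x :=
  ((hD.child_iff x (hD.mem_of_isChild hyx) y).mp hyx).2.1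

theorem B_inter_Bstar_child_subset {x y : V} (hyx : IsChild d r y x) :
    d.B x ∩ Bstar d r y ⊆ {y} := by
  rintro v ⟨hvx, hvy⟩
  rw [hD.child_part x (hD.mem_of_isChild hyx) y hyx] at hvy
  rcases hvy with rfl | hv
  · rfl
  · exact absurd hvx hv.2.1

theorem not_mem_Bstar_of_anc {a b : V} (ha : a ∈ d.N) (hab : Anc d r a b) (hne : a ≠ b) :
    a ∉ Bstar d r b := by
  rcases hab.cases_tail with rfl | ⟨c, hbc, hca⟩
  · exact absurd rfl hne
  · intro hmem
    exact hD.child_ne hca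
      (hD.B_inter_Bstar_child_subset hca ⟨hD.self_mem_B ha, Bstar_subset_of_anc hbc hmem⟩).symm

theorem reflTransGen_of_mem_B {x v : V} (hx : x ∈ d.N) (hv : v ∈ d.B x) :
    ReflTransGen (Asub A (Bstar d r x)) x v := by
  rw [hD.diblock_eq x hx] at hv
  rcases hv with (⟨p, -, -, hp, -, -⟩ | rfl) | hxv
  · exact hp.reflTransGen
  · rfl
  · exact .single hxv

theorem reflTransGen_of_mem_Bstar {x v : V} (hx : x ∈ d.N) (hv : v ∈ Bstar d r x) :
    ReflTransGen (Asub A (Bstar d r x)) x v := by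
  obtain ⟨c, hc, hcx, hvc⟩ := hv
  induction hcx with
  | refl => exact hD.reflTransGen_of_mem_B hc hvc
  | @tail b x hcb hbx ih =>
    have hmono : Asub A (Bstar d r b) ≤ Asub A (Bstar d r x) :=
      fun _ _ ⟨huv, hu, hv⟩ => ⟨huv, Bstar_subset_of_anc (.single hbx) hu,
        Bstar_subset_of_anc (.single hbx) hv⟩
    exact (hD.reflTransGen_of_mem_B hx (hD.child_mem_B hbx)).trans
      (ReflTransGen.mono hmono _ _ (ih hbx.1))

theorem disjoint_Bstar_of_isChild {z w₁ w₂ : V} (h₁ : IsChild d r w₁ z)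
    (h₂ : IsChild d r w₂ z) (hne : w₁ ≠ w₂) :
    Disjoint (Bstar d r w₁) (Bstar d r w₂) := by
  have hz := hD.mem_of_isChild h₁
  rw [Set.disjoint_iff]
  rintro v ⟨hv₁, hv₂⟩
  rcases (hD.child_part z hz w₁ h₁).subset hv₁ with rfl | hp₁
  · exact hne (hD.B_inter_Bstar_child_subset h₂ ⟨hD.child_mem_B h₁, hv₂⟩)
  rcases (hD.child_part z hz w₂ h₂).subset hv₂ with rfl | hp₂
  · exact hne (hD.B_inter_Bstar_child_subset h₁ ⟨hD.child_mem_B h₂, hv₁⟩).symm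
  obtain ⟨p, hp⟩ := reaches_of_reflTransGen (hD.reflTransGen_of_mem_Bstar hz hp₁.1)
  exact hne ((hp₁.2.2 p hp).unique (hp₂.2.2 p hp))

theorem B_inter_B_of_isChild {x y : V} (hy : y ∈ d.N) (hyx : IsChild d r y x) :
    d.B x ∩ d.B y = {y} := by
  refine Set.Subset.antisymm ?_ ?_
  · exact fun v ⟨hvx, hvy⟩ => hD.B_inter_Bstar_child_subset hyx ⟨hvx, B_subset_Bstar hy hvy⟩
  · rintro v rfl
    exact ⟨hD.child_mem_B hyx, hD.self_mem_B hy⟩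

theorem B_inter_B_of_anc {x y : V} (hy : y ∈ d.N) (hxy : Anc d r x y) (hne : x ≠ y)
    (hyx : ¬ IsChild d r y x) : d.B x ∩ d.B y = ∅ := by
  rcases hxy.cases_tail with rfl | ⟨w, hyw, hwx⟩
  · exact absurd rfl hne
  have hwy : w ≠ y := by rintro rfl; exact hyx hwx
  rw [Set.eq_empty_iff_forall_notMem]
  rintro v ⟨hvx, hvy⟩
  obtain rfl : v = w := hD.B_inter_Bstar_child_subset hwx
    ⟨hvx, Bstar_subset_of_anc hyw (B_subset_Bstar hy hvy)⟩
  exact hD.not_mem_Bstar_of_anc hwx.1 hyw hwy (B_subset_Bstar hy hvy)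

theorem B_inter_B_of_not_anc {x y : V} (hx : x ∈ d.N) (hy : y ∈ d.N)
    (hxy : ¬ Anc d r x y) (hyx : ¬ Anc d r y x) : d.B x ∩ d.B y = ∅ := by
  obtain ⟨z, w₁, w₂, h₁, h₂, hne, hw₁, hw₂⟩ :=
    exists_branch_of_not_reflTransGen hyx hxy (hD.tree x hx) (hD.tree y hy)
  exact Set.disjoint_iff_inter_eq_empty.mp <|
    ((hD.disjoint_Bstar_of_isChild h₁ h₂ hne).mono
      ((B_subset_Bstar hx).trans (Bstar_subset_of_anc hw₁))
      ((B_subset_Bstar hy).trans (Bstar_subset_of_anc hw₂)))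

end IsCutDecomp

end Decomp

theorem cutDecomp_diblock_intersections_general {V : Type*}
    (A : V → V → Prop) (r : V)
    (d : PreDecomp V) (h : IsCutDecomp A r d)
    (x y : V) (hx : x ∈ d.N) (hy : y ∈ d.N) (hxy : x ≠ y) :
    (IsChild d r y x → d.B x ∩ d.B y = {y}) ∧
    (¬ IsChild d r y x → ¬ IsChild d r x y → d.B x ∩ d.B y = ∅) := by
  refine ⟨h.B_inter_B_of_isChild hy, fun hyx hxy' => ?_⟩
  by_cases hxy_anc : Anc d r x y
  · exact h.B_inter_B_of_anc hy hxy_anc hxy hyx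
  by_cases hyx_anc : Anc d r y x
  · rw [Set.inter_comm]
    exact h.B_inter_B_of_anc hx hyx_anc hxy.symm hxy'
  exact h.B_inter_B_of_not_anc hx hy hxy_anc hyx_anc

/-- distinct diblocks of a cut decomposition intersect exactly in
`{y}` when `x` is the parent of `y`, and are disjoint otherwise. -/
theorem cutDecomp_diblock_intersections {V : Type*}
    (A : V → V → Prop) (r : V) (hreach : ∀ v, Reaches A r v)
    (d : PreDecomp V) (h : IsCutDecomp A r d)
    (x y : V) (hx : x ∈ d.N) (hy : y ∈ d.N) (hxy : x ≠ y) :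
    (IsChild d r y x → d.B x ∩ d.B y = {y}) ∧
    (¬ IsChild d r y x → ¬ IsChild d r x y → d.B x ∩ d.B y = ∅) :=
  cutDecomp_diblock_intersections_general A r d h x y hx hy hxy

end CutPaper
end
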